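/- For any twin-free graph G of order n and any integer m ≥ 3, γ^{ID}(G □ P_m) ≤ min{ m·γ^{ID}(G), m·γ(G) + ⌈m/3⌉·(n − γ(G)) }. -/
import Mathlib


open SimpleGraph

variable {V W : Type} 

/-- Closed neighborhood of a vertex. -/
def cN (G : SimpleGraph V) (v : V) : Set V := insert v (G.neighborSet v)

/-- `C` is a dominating set of `G`. -/
def IsDomSet (G : SimpleGraph V) (C : Set V) : Prop :=
  ∀ v : V, (cN G v ∩ C).Nonempty

/-- `C` is an identifying code of `G`. -/
def IsIDCode (G : SimpleGraph V) (C : Set V) : Prop :=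
  IsDomSet G C ∧ ∀ u v : V, u ≠ v → cN G u ∩ C ≠ cN G v ∩ C

/-- The identifying code number `γ^{ID}(G)`. -/
noncomputable def idNum (G : SimpleGraph V) : ℕ :=
  sInf {k | ∃ C : Set V, IsIDCode G C ∧ C.ncard = k}

/-- The domination number `γ(G)`. -/
noncomputable def domNum (G : SimpleGraph V) : ℕ :=
  sInf {k | ∃ C : Set V, IsDomSet G C ∧ C.ncard = k}

/-- A graph is twin-free if distinct vertices have distinct closed neighborhoods. -/
def TwinFree (G : SimpleGraph V) : Prop :=
  ∀ u v : V, cN G u = cN G v → u = v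

/-- A 2-packing: vertices pairwise at distance at least 3. -/
def IsTwoPacking (G : SimpleGraph V) (S : Set V) : Prop :=
  ∀ u ∈ S, ∀ v ∈ S, u ≠ v → 3 ≤ G.dist u v

/-- The 2-packing number `ρ₂(G)`. -/
noncomputable def pack2 (G : SimpleGraph V) : ℕ :=
  sSup {k | ∃ S : Set V, IsTwoPacking G S ∧ S.ncard = k}

/-- The prism of `G`: Cartesian product with `K₂`. -/
abbrev prism (G : SimpleGraph V) : SimpleGraph (V × Fin 2) :=
  G □ (⊤ : SimpleGraph (Fin 2))

/-- The graph `A_k` on `2k` vertices `x₁,…,x_{2k}`, with `xᵢ ~ xⱼ` iff `|i-j| ≤ k-1`. -/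
def graphA (k : ℕ) : SimpleGraph (Fin (2 * k)) :=
  SimpleGraph.fromRel (fun i j => |(i : ℤ) - (j : ℤ)| ≤ (k : ℤ) - 1)

/-- The join `G ⋈ H` of two graphs. -/
def joinG (G : SimpleGraph V) (H : SimpleGraph W) : SimpleGraph (V ⊕ W) :=
  SimpleGraph.fromRel (fun a b =>
    match a, b with
    | Sum.inl u, Sum.inl v => G.Adj u v
    | Sum.inr u, Sum.inr v => H.Adj u v
    | _, _ => True)

/-- The corona `H ∘ K₁`: add a pendant vertex to each vertex. -/
def corona (H : SimpleGraph V) : SimpleGraph (V ⊕ V) :=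
  SimpleGraph.fromRel (fun a b =>
    match a, b with
    | Sum.inl u, Sum.inl v => H.Adj u v
    | Sum.inl u, Sum.inr v => u = v
    | _, _ => False)

/-- The class `𝒜`: closure of `{A_k : k ≥ 1}` under join, up to isomorphism. -/
inductive ClassA : {V : Type} → SimpleGraph V → Prop
  | base (k : ℕ) (hk : 1 ≤ k) : ClassA (graphA k)
  | join {V W : Type} (G : SimpleGraph V) (H : SimpleGraph W) :
      ClassA G → ClassA H → ClassA (joinG G H)
  | iso {V W : Type} (G : SimpleGraph V) (H : SimpleGraph W) :
      ClassA G → (G ≃g H) → ClassA H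

/-- Membership in `𝒜 ⋈ K₁`. -/
def ClassAJoinK1 (G : SimpleGraph V) : Prop :=
  ∃ (W : Type) (H : SimpleGraph W), ClassA H ∧
    Nonempty (G ≃g joinG H (⊤ : SimpleGraph Unit))

lemma mem_cN {G : SimpleGraph V} {u x : V} : x ∈ cN G u ↔ x = u ∨ G.Adj u x := by
  simp [cN, SimpleGraph.mem_neighborSet]

lemma mem_S {G : SimpleGraph V} {m : ℕ} {D : Set V} {T : Set (Fin m)}
    {u x : V} {i l : Fin m} :
    (x, l) ∈ cN (G □ pathGraph m) (u, i) ∩ {p : V × Fin m | p.1 ∈ D ∨ p.2 ∈ T} ↔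
      ((l = i ∧ x ∈ cN G u) ∨ (x = u ∧ (pathGraph m).Adj i l)) ∧ (x ∈ D ∨ l ∈ T) := by
  simp only [Set.mem_inter_iff, Set.mem_setOf_eq, mem_cN, boxProd_adj, Prod.mk.injEq]
  constructor
  · rintro ⟨h1, h2⟩
    refine ⟨?_, h2⟩
    rcases h1 with ⟨hx, hl⟩ | ⟨ha, hl⟩ | ⟨ha, hx⟩
    · exact Or.inl ⟨hl, Or.inl hx⟩
    · exact Or.inl ⟨hl.symm, Or.inr ha⟩
    · exact Or.inr ⟨hx.symm, ha⟩
  · rintro ⟨h1, h2⟩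
    refine ⟨?_, h2⟩
    rcases h1 with ⟨hl, hx | ha⟩ | ⟨hx, ha⟩
    · exact Or.inl ⟨hx, hl⟩
    · exact Or.inr (Or.inl ⟨ha, hl.symm⟩)
    · exact Or.inr (Or.inr ⟨ha, hx.symm⟩)

lemma path_sep {m : ℕ} (hm : 3 ≤ m) {i j : Fin m} (hij : (pathGraph m).Adj i j) :
    ∃ l : Fin m, ¬((l = i ∨ (pathGraph m).Adj i l) ↔ (l = j ∨ (pathGraph m).Adj j l)) := by
  have h := pathGraph_adj.1 hij
  have hi := i.isLt
  have hj := j.isLt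
  by_cases hmin : 1 ≤ min i.val j.val
  · refine ⟨⟨min i.val j.val - 1, by omega⟩, ?_⟩
    simp only [Fin.ext_iff, pathGraph_adj]
    omega
  · refine ⟨⟨2, by omega⟩, ?_⟩
    simp only [Fin.ext_iff, pathGraph_adj]
    omega

lemma key {V : Type} (G : SimpleGraph V) (ht : TwinFree G)
    (m : ℕ) (hm : 3 ≤ m) (D : Set V) (hD : IsDomSet G D)
    (T : Set (Fin m))
    (hsep : ∀ u v : V, u ≠ v → cN G u ∩ D = cN G v ∩ D →
        ∀ i : Fin m, i ∉ T → ∃ l, (pathGraph m).Adj l i ∧ l ∈ T) :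
    IsIDCode (G □ pathGraph m) {p : V × Fin m | p.1 ∈ D ∨ p.2 ∈ T} := by
  constructor
  · rintro ⟨u, i⟩
    obtain ⟨w, hw, hwD⟩ := hD u
    exact ⟨(w, i), mem_S.2 ⟨Or.inl ⟨rfl, hw⟩, Or.inl hwD⟩⟩
  · rintro ⟨u, i⟩ ⟨v, j⟩ hne hEq
    have h : ∀ (x : V) (l : Fin m),
        (((l = i ∧ x ∈ cN G u) ∨ (x = u ∧ (pathGraph m).Adj i l)) ∧ (x ∈ D ∨ l ∈ T)) ↔
        (((l = j ∧ x ∈ cN G v) ∨ (x = v ∧ (pathGraph m).Adj j l)) ∧ (x ∈ D ∨ l ∈ T)) := by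
      intro x l
      rw [← mem_S, ← mem_S, hEq]
    by_cases hij : i = j
    · subst hij
      have huv : u ≠ v := by
        intro hc; exact hne (by rw [hc])
      by_cases hDeq : cN G u ∩ D = cN G v ∩ D
      · by_cases hiT : i ∈ T
        · have hcc : cN G u ≠ cN G v := fun hc => huv (ht u v hc)
          have : ¬ ∀ x, x ∈ cN G u ↔ x ∈ cN G v := fun hx => hcc (Set.ext hx)
          push_neg at this
          obtain ⟨x, hx⟩ := this
          rcases hx with ⟨hxu, hxv⟩ | ⟨hxu, hxv⟩
          · have := (h x i).1 ⟨Or.inl ⟨rfl, hxu⟩, Or.inr hiT⟩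
            rcases this.1 with ⟨_, hc⟩ | ⟨hc, hadj⟩
            · exact hxv hc
            · exact (pathGraph m).irrefl hadj
          · have := (h x i).2 ⟨Or.inl ⟨rfl, hxv⟩, Or.inr hiT⟩
            rcases this.1 with ⟨_, hc⟩ | ⟨hc, hadj⟩
            · exact hxu hc
            · exact (pathGraph m).irrefl hadj
        · obtain ⟨l, hl, hlT⟩ := hsep u v huv hDeq i hiT
          have := (h u l).1 ⟨Or.inr ⟨rfl, hl.symm⟩, Or.inr hlT⟩
          rcases this.1 with ⟨hli, _⟩ | ⟨hc, _⟩
          · exact hiT (hli ▸ hlT)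
          · exact huv hc
      · have : ¬ ∀ x, x ∈ cN G u ∩ D ↔ x ∈ cN G v ∩ D := fun hx => hDeq (Set.ext hx)
        push_neg at this
        obtain ⟨x, hx⟩ := this
        rcases hx with ⟨hxu, hxv⟩ | ⟨hxu, hxv⟩
        · have := (h x i).1 ⟨Or.inl ⟨rfl, hxu.1⟩, Or.inl hxu.2⟩
          rcases this.1 with ⟨_, hc⟩ | ⟨hc, hadj⟩
          · exact hxv ⟨hc, hxu.2⟩
          · exact (pathGraph m).irrefl hadj
        · have := (h x i).2 ⟨Or.inl ⟨rfl, hxv.1⟩, Or.inl hxv.2⟩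
          rcases this.1 with ⟨_, hc⟩ | ⟨hc, hadj⟩
          · exact hxu ⟨hc, hxv.2⟩
          · exact (pathGraph m).irrefl hadj
    · -- i ≠ j
      obtain ⟨w, hw, hwD⟩ := hD u
      have h1 := ((h w i).1 ⟨Or.inl ⟨rfl, hw⟩, Or.inl hwD⟩).1
      have hwv : w = v ∧ (pathGraph m).Adj j i := by
        rcases h1 with ⟨hc, _⟩ | hh
        · exact absurd hc hij
        · exact hh
      obtain ⟨w', hw', hw'D⟩ := hD v
      have h2 := ((h w' j).2 ⟨Or.inl ⟨rfl, hw'⟩, Or.inl hw'D⟩).1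
      have hw'u : w' = u ∧ (pathGraph m).Adj i j := by
        rcases h2 with ⟨hc, _⟩ | hh
        · exact absurd hc.symm hij
        · exact hh
      have huD : u ∈ D := hw'u.1 ▸ hw'D
      -- every element of cN G u ∩ D equals v; apply to u itself
      have h3 := ((h u i).1 ⟨Or.inl ⟨rfl, mem_cN.2 (Or.inl rfl)⟩, Or.inl huD⟩).1
      have huv : u = v := by
        rcases h3 with ⟨hc, _⟩ | hh
        · exact absurd hc hij
        · exact hh.1
      subst huv
      obtain ⟨l, hl⟩ := path_sep hm hw'u.2
      apply hl
      have hul : u ∈ cN G u := mem_cN.2 (Or.inl rfl)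
      constructor
      · rintro (hli | hadj)
        · subst hli
          have := ((h u l).1 ⟨Or.inl ⟨rfl, hul⟩, Or.inl huD⟩).1
          rcases this with ⟨hc, _⟩ | ⟨_, hadj⟩
          · exact Or.inl hc
          · exact Or.inr hadj
        · have := ((h u l).1 ⟨Or.inr ⟨rfl, hadj⟩, Or.inl huD⟩).1
          rcases this with ⟨hc, _⟩ | ⟨_, hadj'⟩
          · exact Or.inl hc
          · exact Or.inr hadj'
      · rintro (hlj | hadj)
        · subst hlj
          have := ((h u l).2 ⟨Or.inl ⟨rfl, hul⟩, Or.inl huD⟩).1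
          rcases this with ⟨hc, _⟩ | ⟨_, hadj⟩
          · exact Or.inl hc
          · exact Or.inr hadj
        · have := ((h u l).2 ⟨Or.inr ⟨rfl, hadj⟩, Or.inl huD⟩).1
          rcases this with ⟨hc, _⟩ | ⟨_, hadj'⟩
          · exact Or.inl hc
          · exact Or.inr hadj'

lemma ncard_prod' {A B : Type} (s : Set A) (t : Set B) :
    (s ×ˢ t).ncard = s.ncard * t.ncard := by
  rw [← Nat.card_coe_set_eq, ← Nat.card_coe_set_eq, ← Nat.card_coe_set_eq,
    Nat.card_congr (Equiv.Set.prod s t), Nat.card_prod]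

lemma card_C {V : Type} [Fintype V] {m : ℕ} (D : Set V) (T : Set (Fin m)) :
    ({p : V × Fin m | p.1 ∈ D ∨ p.2 ∈ T}).ncard
      = m * D.ncard + T.ncard * (Fintype.card V - D.ncard) := by
  have hset : {p : V × Fin m | p.1 ∈ D ∨ p.2 ∈ T}
      = (D ×ˢ (Set.univ : Set (Fin m))) ∪ (Dᶜ ×ˢ T) := by
    ext ⟨a, b⟩
    simp only [Set.mem_setOf_eq, Set.mem_union, Set.mem_prod, Set.mem_univ, and_true,
      Set.mem_compl_iff]
    tauto
  have hdisj : Disjoint (D ×ˢ (Set.univ : Set (Fin m))) (Dᶜ ×ˢ T) := by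
    rw [Set.disjoint_left]
    rintro ⟨a, b⟩ ⟨ha, -⟩ ⟨ha', -⟩
    exact ha' ha
  rw [hset, Set.ncard_union_eq hdisj (Set.toFinite _) (Set.toFinite _),
    ncard_prod', ncard_prod', Set.ncard_univ, Nat.card_eq_fintype_card, Fintype.card_fin]
  have hcompl : D.ncard + Dᶜ.ncard = Fintype.card V := by
    rw [Set.ncard_add_ncard_compl, Nat.card_eq_fintype_card]
  have h2 : Dᶜ.ncard = Fintype.card V - D.ncard := by omega
  rw [h2, mul_comm D.ncard m, mul_comm (Fintype.card V - D.ncard) T.ncard]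

/-- The chosen layer set. -/
noncomputable def Tset (m : ℕ) (hm : 3 ≤ m) : Set (Fin m) :=
  (fun t : ℕ => (⟨min (3 * t + 1) (m - 1), by omega⟩ : Fin m)) '' Set.Iio ((m + 2) / 3)

lemma Tset_card (m : ℕ) (hm : 3 ≤ m) : (Tset m hm).ncard = (m + 2) / 3 := by
  rw [Tset, Set.ncard_image_of_injOn, ← Finset.coe_range, Set.ncard_coe_finset,
    Finset.card_range]
  intro a ha b hb hab
  simp only [Set.mem_Iio] at ha hb
  simp only [Fin.ext_iff] at hab
  omega

lemma Tset_dom (m : ℕ) (hm : 3 ≤ m) (i : Fin m) (hi : i ∉ Tset m hm) :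
    ∃ l, (pathGraph m).Adj l i ∧ l ∈ Tset m hm := by
  have hiv := i.isLt
  have hmem : ∀ a : ℕ, a < (m + 2) / 3 →
      (⟨min (3 * a + 1) (m - 1), by omega⟩ : Fin m) ∈ Tset m hm := by
    intro a ha
    exact ⟨a, ha, rfl⟩
  by_cases h1 : i.val % 3 = 1
  · exfalso
    apply hi
    have ha : i.val / 3 < (m + 2) / 3 := by omega
    have := hmem (i.val / 3) ha
    convert this using 2
    omega
  by_cases h2 : i.val % 3 = 2
  · have ha : i.val / 3 < (m + 2) / 3 := by omega
    refine ⟨_, ?_, hmem (i.val / 3) ha⟩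
    rw [pathGraph_adj]
    simp only
    omega
  · -- i.val % 3 = 0
    have h0 : i.val % 3 = 0 := by omega
    by_cases hlast : i.val = m - 1
    · -- then m % 3 = 1 and i = f (i/3), contradiction
      exfalso
      apply hi
      have ha : i.val / 3 < (m + 2) / 3 := by omega
      have := hmem (i.val / 3) ha
      convert this using 2
      omega
    · have ha : i.val / 3 < (m + 2) / 3 := by omega
      refine ⟨_, ?_, hmem (i.val / 3) ha⟩
      rw [pathGraph_adj]
      simp only
      omega

lemma univ_ID {V : Type} (G : SimpleGraph V) (ht : TwinFree G) : IsIDCode G Set.univ :=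
  ⟨fun v => ⟨v, mem_cN.2 (Or.inl rfl), trivial⟩,
   fun u v huv h => huv (ht u v (by simpa using h))⟩

/-- for twin-free G of order n and m ≥ 3,
γ^ID(G □ P_m) ≤ min(m·γ^ID(G), m·γ(G) + ⌈m/3⌉(n - γ(G))). -/
theorem stmt19 {V : Type} [Fintype V] (G : SimpleGraph V) (ht : TwinFree G)
    (n : ℕ) (hn : Fintype.card V = n) (m : ℕ) (hm : 3 ≤ m) :
    idNum (G □ pathGraph m) ≤
      min (m * idNum G) (m * domNum G + ((m + 2) / 3) * (n - domNum G)) := by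
  subst hn
  refine le_min ?_ ?_
  · have hne : ({k | ∃ C : Set V, IsIDCode G C ∧ C.ncard = k}).Nonempty :=
      ⟨Set.univ.ncard, Set.univ, univ_ID G ht, rfl⟩
    obtain ⟨C, hC, hCcard⟩ : ∃ C : Set V, IsIDCode G C ∧ C.ncard = idNum G :=
      Nat.sInf_mem hne
    have hcode := key G ht m hm C hC.1 ∅ (fun u v huv heq => absurd heq (hC.2 u v huv))
    have hle : idNum (G □ pathGraph m) ≤
        ({p : V × Fin m | p.1 ∈ C ∨ p.2 ∈ (∅ : Set (Fin m))}).ncard :=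
      Nat.sInf_le ⟨_, hcode, rfl⟩
    rw [card_C] at hle
    simpa [hCcard] using hle
  · have hne : ({k | ∃ C : Set V, IsDomSet G C ∧ C.ncard = k}).Nonempty :=
      ⟨Set.univ.ncard, Set.univ, fun v => ⟨v, mem_cN.2 (Or.inl rfl), trivial⟩, rfl⟩
    obtain ⟨D, hDdom, hDcard⟩ : ∃ C : Set V, IsDomSet G C ∧ C.ncard = domNum G :=
      Nat.sInf_mem hne
    have hcode := key G ht m hm D hDdom (Tset m hm)
      (fun u v _ _ i hi => Tset_dom m hm i hi)
    have hle : idNum (G □ pathGraph m) ≤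
        ({p : V × Fin m | p.1 ∈ D ∨ p.2 ∈ Tset m hm}).ncard :=
      Nat.sInf_le ⟨_, hcode, rfl⟩
    rw [card_C, Tset_card, hDcard] at hle
    exact hle
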